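/- Let φ̲, φ̄, ψ̲, ψ̄ be Marshall generators with φ̲ ≤ φ̄ and ψ̲ ≤ ψ̄ pointwise, and set C̲ = C^M_{φ̲,ψ̲} and C̄ = C^M_{φ̄,ψ̄}. Then the imprecise copula (C̲, C̄) is coherent: for every (u,v) ∈ [0,1]², the infimum of C(u,v) over all copulas C with C̲ ≤ C ≤ C̄ equals C̲(u,v), and the supremum of C(u,v) over all copulas C with C̲ ≤ C ≤ C̄ equals C̄(u,v). -/

import Mathlib

/-!
Both bounds are themselves copulas: a Marshall copula is 2-increasing because, when the
upper-right corner of a rectangle lies on the branch `φ u * v`, so does the lower-right one, and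
along any vertical line `v ↦ C(u, v)` grows at rate at most `φ u`, which is monotone in `u`.
Since `C̲ ≤ C̄`, the set of values `C u v` over copulas between the bounds therefore contains
its lower and upper bounds `C̲ u v` and `C̄ u v`, which are its infimum and supremum.
-/

/-- A (bivariate) copula on [0,1]². -/
def IsCopula (C : ℝ → ℝ → ℝ) : Prop :=
  (∀ u ∈ Set.Icc (0:ℝ) 1, ∀ v ∈ Set.Icc (0:ℝ) 1, C u v ∈ Set.Icc (0:ℝ) 1) ∧
  (∀ u ∈ Set.Icc (0:ℝ) 1, C u 0 = 0) ∧
  (∀ v ∈ Set.Icc (0:ℝ) 1, C 0 v = 0) ∧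
  (∀ u ∈ Set.Icc (0:ℝ) 1, C u 1 = u) ∧
  (∀ v ∈ Set.Icc (0:ℝ) 1, C 1 v = v) ∧
  (∀ u₁ u₂ v₁ v₂ : ℝ, 0 ≤ u₁ → u₁ ≤ u₂ → u₂ ≤ 1 → 0 ≤ v₁ → v₁ ≤ v₂ → v₂ ≤ 1 →
    0 ≤ C u₂ v₂ - C u₁ v₂ - C u₂ v₁ + C u₁ v₁)

/-- A Marshall generator. -/
def IsMarshallGen (φ : ℝ → ℝ) : Prop :=
  MonotoneOn φ (Set.Icc 0 1) ∧
  (∀ u ∈ Set.Icc (0:ℝ) 1, φ u ∈ Set.Icc (0:ℝ) 1) ∧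
  φ 0 = 0 ∧ φ 1 = 1 ∧
  (∀ u u' : ℝ, 0 ≤ u → u ≤ u' → u' ≤ 1 → φ u' * u ≤ φ u * u')

/-- The Marshall copula of generators φ, ψ. -/
noncomputable def marshallCopula (φ ψ : ℝ → ℝ) : ℝ → ℝ → ℝ :=
  fun u v => min (φ u * v) (ψ v * u)

open Set

namespace IsMarshallGen

variable {φ : ℝ → ℝ} (hφ : IsMarshallGen φ)
include hφ

theorem apply_mul_le {u u' : ℝ} (hu : 0 ≤ u) (huu' : u ≤ u') (hu' : u' ≤ 1) :
    φ u' * u ≤ φ u * u' :=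
  hφ.2.2.2.2 u u' hu huu' hu'

theorem self_le_apply {u : ℝ} (hu : u ∈ Icc (0 : ℝ) 1) : u ≤ φ u := by
  simpa [hφ.2.2.2.1] using hφ.apply_mul_le hu.1 hu.2 le_rfl

end IsMarshallGen

theorem marshallCopula_swap (φ ψ : ℝ → ℝ) (u v : ℝ) :
    marshallCopula ψ φ v u = marshallCopula φ ψ u v := by
  simp [marshallCopula, min_comm]

theorem marshallCopula_le_marshallCopula {φl φh ψl ψh : ℝ → ℝ}
    (hφ : ∀ u ∈ Icc (0 : ℝ) 1, φl u ≤ φh u) (hψ : ∀ v ∈ Icc (0 : ℝ) 1, ψl v ≤ ψh v)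
    {u v : ℝ} (hu : u ∈ Icc (0 : ℝ) 1) (hv : v ∈ Icc (0 : ℝ) 1) :
    marshallCopula φl ψl u v ≤ marshallCopula φh ψh u v :=
  min_le_min (mul_le_mul_of_nonneg_right (hφ u hu) hv.1)
    (mul_le_mul_of_nonneg_right (hψ v hv) hu.1)

section

variable {φ ψ : ℝ → ℝ}

theorem marshallCopula_sub_le (hψ : IsMarshallGen ψ) {u v₁ v₂ : ℝ} (hu : 0 ≤ u)
    (hv₁ : 0 ≤ v₁) (hv₁₂ : v₁ ≤ v₂) (hv₂ : v₂ ≤ 1) :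
    marshallCopula φ ψ u v₂ - marshallCopula φ ψ u v₁ ≤ φ u * (v₂ - v₁) := by
  rcases (hv₁.trans hv₁₂).eq_or_lt with rfl | hv₂_pos
  · obtain rfl : v₁ = 0 := le_antisymm hv₁₂ hv₁
    simp
  set m := marshallCopula φ ψ u v₂
  have hm_le_φ : m ≤ φ u * v₂ := min_le_left _ _
  have hm_le_ψ : m ≤ ψ v₂ * u := min_le_right _ _
  have hψ_ratio := hψ.apply_mul_le hv₁ hv₁₂ hv₂
  -- `m * v₁ ≤ ψ v₂ * v₁ * u ≤ ψ v₁ * v₂ * u` and `m * (v₂ - v₁) ≤ φ u * v₂ * (v₂ - v₁)`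
  have hm_le : m ≤ ψ v₁ * u + φ u * (v₂ - v₁) := by
    refine le_of_mul_le_mul_right ?_ hv₂_pos
    nlinarith [mul_le_mul_of_nonneg_right hm_le_ψ hv₁, mul_le_mul_of_nonneg_right hψ_ratio hu,
      mul_le_mul_of_nonneg_right hm_le_φ (sub_nonneg.mpr hv₁₂)]
  rcases min_cases (φ u * v₁) (ψ v₁ * u) with ⟨h, -⟩ | ⟨h, -⟩ <;>
    simp only [marshallCopula, h] <;> linarith

theorem marshallCopula_eq_left_of_le (hψ : IsMarshallGen ψ) {u v₁ v₂ : ℝ} (hu : 0 ≤ u)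
    (hv₁ : 0 ≤ v₁) (hv₁₂ : v₁ ≤ v₂) (hv₂ : v₂ ≤ 1) (h : φ u * v₂ ≤ ψ v₂ * u) :
    marshallCopula φ ψ u v₁ = φ u * v₁ := by
  refine min_eq_left ?_
  rcases (hv₁.trans hv₁₂).eq_or_lt with rfl | hv₂_pos
  · obtain rfl : v₁ = 0 := le_antisymm hv₁₂ hv₁
    simpa using h
  refine le_of_mul_le_mul_right ?_ hv₂_pos
  nlinarith [mul_le_mul_of_nonneg_right h hv₁,
    mul_le_mul_of_nonneg_right (hψ.apply_mul_le hv₁ hv₁₂ hv₂) hu]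

theorem marshallCopula_volume_nonneg_of_le (hφ : IsMarshallGen φ) (hψ : IsMarshallGen ψ)
    {u₁ u₂ v₁ v₂ : ℝ} (hu₁ : 0 ≤ u₁) (hu₁₂ : u₁ ≤ u₂) (hu₂ : u₂ ≤ 1)
    (hv₁ : 0 ≤ v₁) (hv₁₂ : v₁ ≤ v₂) (hv₂ : v₂ ≤ 1) (h : φ u₂ * v₂ ≤ ψ v₂ * u₂) :
    0 ≤ marshallCopula φ ψ u₂ v₂ - marshallCopula φ ψ u₁ v₂ -
      marshallCopula φ ψ u₂ v₁ + marshallCopula φ ψ u₁ v₁ := by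
  have hu₂_nonneg := hu₁.trans hu₁₂
  have h_upper : marshallCopula φ ψ u₂ v₂ = φ u₂ * v₂ :=
    marshallCopula_eq_left_of_le hψ hu₂_nonneg (hv₁.trans hv₁₂) le_rfl hv₂ h
  have h_lower : marshallCopula φ ψ u₂ v₁ = φ u₂ * v₁ :=
    marshallCopula_eq_left_of_le hψ hu₂_nonneg hv₁ hv₁₂ hv₂ h
  have h_left := marshallCopula_sub_le (φ := φ) hψ hu₁ hv₁ hv₁₂ hv₂
  have hφ_mono : φ u₁ ≤ φ u₂ := hφ.1 ⟨hu₁, hu₁₂.trans hu₂⟩ ⟨hu₂_nonneg, hu₂⟩ hu₁₂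
  rw [h_upper, h_lower]
  nlinarith [mul_le_mul_of_nonneg_right hφ_mono (sub_nonneg.mpr hv₁₂)]

theorem marshallCopula_zero_right (hψ : IsMarshallGen ψ) (u : ℝ) :
    marshallCopula φ ψ u 0 = 0 := by
  simp [marshallCopula, hψ.2.2.1]

theorem marshallCopula_one_right (hφ : IsMarshallGen φ) (hψ : IsMarshallGen ψ) {u : ℝ}
    (hu : u ∈ Icc (0 : ℝ) 1) : marshallCopula φ ψ u 1 = u := by
  simpa [marshallCopula, hψ.2.2.2.1] using hφ.self_le_apply hu

theorem isCopula_marshallCopula (hφ : IsMarshallGen φ) (hψ : IsMarshallGen ψ) :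
    IsCopula (marshallCopula φ ψ) := by
  refine ⟨fun u hu v hv => ⟨?_, ?_⟩, fun u _ => marshallCopula_zero_right hψ u,
    fun v _ => marshallCopula_swap φ ψ 0 v ▸ marshallCopula_zero_right hφ v,
    fun u hu => marshallCopula_one_right hφ hψ hu,
    fun v hv => marshallCopula_swap φ ψ 1 v ▸ marshallCopula_one_right hψ hφ hv, ?_⟩
  · exact le_min (mul_nonneg (hφ.2.1 u hu).1 hv.1) (mul_nonneg (hψ.2.1 v hv).1 hu.1)
  · exact (min_le_left _ _).trans (mul_le_one₀ (hφ.2.1 u hu).2 hv.1 hv.2)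
  · intro u₁ u₂ v₁ v₂ hu₁ hu₁₂ hu₂ hv₁ hv₁₂ hv₂
    rcases le_total (φ u₂ * v₂) (ψ v₂ * u₂) with h | h
    · exact marshallCopula_volume_nonneg_of_le hφ hψ hu₁ hu₁₂ hu₂ hv₁ hv₁₂ hv₂ h
    · simpa only [marshallCopula_swap, sub_add_eq_add_sub, sub_sub, add_comm] using
        marshallCopula_volume_nonneg_of_le hψ hφ hv₁ hv₁₂ hv₂ hu₁ hu₁₂ hu₂ h

end

/-- The imprecise Marshall copula (C^M_{φ̲,ψ̲}, C^M_{φ̄,ψ̄}) is coherent. -/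
theorem imprecise_marshall_coherent
    (φl φh ψl ψh : ℝ → ℝ)
    (hφl : IsMarshallGen φl) (hφh : IsMarshallGen φh)
    (hψl : IsMarshallGen ψl) (hψh : IsMarshallGen ψh)
    (hφ : ∀ u ∈ Set.Icc (0:ℝ) 1, φl u ≤ φh u)
    (hψ : ∀ v ∈ Set.Icc (0:ℝ) 1, ψl v ≤ ψh v) :
    ∀ u ∈ Set.Icc (0:ℝ) 1, ∀ v ∈ Set.Icc (0:ℝ) 1,
      sInf {c : ℝ | ∃ C : ℝ → ℝ → ℝ, IsCopula C ∧
          (∀ u' ∈ Set.Icc (0:ℝ) 1, ∀ v' ∈ Set.Icc (0:ℝ) 1,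
            marshallCopula φl ψl u' v' ≤ C u' v' ∧
            C u' v' ≤ marshallCopula φh ψh u' v') ∧
          c = C u v} = marshallCopula φl ψl u v ∧
      sSup {c : ℝ | ∃ C : ℝ → ℝ → ℝ, IsCopula C ∧
          (∀ u' ∈ Set.Icc (0:ℝ) 1, ∀ v' ∈ Set.Icc (0:ℝ) 1,
            marshallCopula φl ψl u' v' ≤ C u' v' ∧
            C u' v' ≤ marshallCopula φh ψh u' v') ∧
          c = C u v} = marshallCopula φh ψh u v := by
  intro u hu v hv
  constructor
  · refine IsLeast.csInf_eq ⟨⟨_, isCopula_marshallCopula hφl hψl,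
      fun u' hu' v' hv' => ⟨le_rfl, marshallCopula_le_marshallCopula hφ hψ hu' hv'⟩, rfl⟩, ?_⟩
    rintro _ ⟨C, -, hC, rfl⟩
    exact (hC u hu v hv).1
  · refine IsGreatest.csSup_eq ⟨⟨_, isCopula_marshallCopula hφh hψh,
      fun u' hu' v' hv' => ⟨marshallCopula_le_marshallCopula hφ hψ hu' hv', le_rfl⟩, rfl⟩, ?_⟩
    rintro _ ⟨C, -, hC, rfl⟩
    exact (hC u hu v hv).2
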